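/- arXiv:2309.01657 — 3 statements merged into one kernel-verified Lean document; each statement's English description precedes it below -/
import Mathlib

section
/- Let {1,…,N} be partitioned into K pairwise disjoint nonempty vertex sets V₁, …, V_K, and for each k let S_k ∈ {0,1}^{|V_k|×N} be the selection matrix of V_k (with S_k(i,j) = 1 if and only if j is the i-th element of V_k). Let g₁,…,g_K ∈ ℝ^N, let G_k = diag(g_k), and let G_k^† be the diagonal matrix whose i-th diagonal entry is g_k(i)⁻¹ when g_k(i) ≠ 0 and 0 otherwise. Assume there exist constants δ, μ, γ > 0 such that |S_k G_m| ≼ δ S_k entrywise for all k ≠ m, and μ S_k ≼ S_k G_k ≼ γ S_k entrywise for all k. Let u₁,…,u_N ∈ ℝ^N be unit-norm vectors, let h₁,…,h_K ∈ ℝ^N with ‖h_k‖₂ = 1, set C_{km} = Σ_{i=1}^N h_k(i) h_m(i) u_i u_iᵀ and C_x = Σ_{k=1}^K Σ_{m=1}^K G_k C_{km} G_mᵀ. Then for all k, m ∈ {1,…,K}: |S_k G_k^† C_x (G_m^†)ᵀ S_mᵀ − S_k C_{km} S_mᵀ| ≼ (2(K−1)(δ/μ) + (K−1)²(δ/μ)²)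 · 1_{|V_k|×|V_m|} entrywise. -/
open Matrix

/-- The binary selection matrix of a vertex set `V ⊆ {1,…,N}`: rows are indexed by the
elements of `V`, and `S(x, j) = 1` iff `j` is (the vertex corresponding to) the row `x`. -/
noncomputable def selMatrix {N : ℕ} (V : Finset (Fin N)) :
    Matrix {i : Fin N // i ∈ V} (Fin N) ℝ :=
  fun x j => if (x : Fin N) = j then 1 else 0

lemma selMatrix_mul {N : ℕ} {V : Finset (Fin N)} (M : Matrix (Fin N) (Fin N) ℝ)
    (x : {i : Fin N // i ∈ V}) (j : Fin N) :
    (selMatrix V * M) x j = M x j := by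
  simp [selMatrix, Matrix.mul_apply, ite_mul]

lemma mul_selMatrixT {N : ℕ} {V : Finset (Fin N)} {α : Type*}
    (M : Matrix α (Fin N) ℝ)
    (i : α) (y : {i : Fin N // i ∈ V}) :
    (M * (selMatrix V)ᵀ) i y = M i y := by
  simp [selMatrix, Matrix.mul_apply, Matrix.transpose_apply, mul_ite, eq_comm]

lemma sum_ite_eq_card {K : ℕ} (k : Fin K) (q : ℝ) :
    ∑ k' : Fin K, (if k' = k then (1:ℝ) else q) = 1 + ((K:ℝ) - 1) * q := by
  rw [← Finset.sum_erase_add _ _ (Finset.mem_univ k)]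
  have h1 : ∀ k' ∈ Finset.univ.erase k, (if k' = k then (1:ℝ) else q) = q := by
    intro k' hk'; simp [Finset.ne_of_mem_erase hk']
  rw [Finset.sum_congr rfl h1, Finset.sum_const, Finset.card_erase_of_mem (Finset.mem_univ k)]
  have hK : 1 ≤ K := k.pos
  simp [Nat.cast_sub hK]
  ring

lemma abs_sum_prod_le_one {N : ℕ} (u : Fin N → Fin N → ℝ) (hu : ∀ i, ∑ j, (u i j) ^ 2 = 1)
    (ha hb : Fin N → ℝ) (hha : ∑ i, (ha i) ^ 2 = 1) (hhb : ∑ i, (hb i) ^ 2 = 1)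
    (p q : Fin N) :
    |∑ i, (ha i * hb i) * (u i p * u i q)| ≤ 1 := by
  have hub : ∀ i j, |u i j| ≤ 1 := by
    intro i j
    rw [← sq_le_one_iff_abs_le_one]
    calc u i j ^ 2 ≤ ∑ j', (u i j') ^ 2 :=
          Finset.single_le_sum (f := fun j' => u i j' ^ 2)
            (fun j' _ => sq_nonneg _) (Finset.mem_univ j)
      _ = 1 := hu i
  have key : ∑ i, |ha i| * |hb i| ≤ 1 := by
    have h2 : (∑ i, |ha i| * |hb i|) ^ 2 ≤ 1 := by
      have := Finset.sum_mul_sq_le_sq_mul_sq Finset.univ (fun i => |ha i|) (fun i => |hb i|)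
      simpa [sq_abs, hha, hhb] using this
    have h3 : 0 ≤ ∑ i, |ha i| * |hb i| :=
      Finset.sum_nonneg fun i _ => mul_nonneg (abs_nonneg _) (abs_nonneg _)
    nlinarith
  calc |∑ i, (ha i * hb i) * (u i p * u i q)|
      ≤ ∑ i, |(ha i * hb i) * (u i p * u i q)| := Finset.abs_sum_le_sum_abs _ _
    _ ≤ ∑ i, |ha i| * |hb i| := by
        apply Finset.sum_le_sum
        intro i _
        rw [abs_mul, abs_mul, abs_mul]
        refine mul_le_of_le_one_right (mul_nonneg (abs_nonneg _) (abs_nonneg _)) ?_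
        exact mul_le_one₀ (hub i p) (abs_nonneg _) (hub i q)
    _ ≤ 1 := key

/-- Theorem 2: under the membership localization assumption, the cross-covariance
`C_{km}` of the component processes approximates the (membership-normalized) overall
covariance `C_x` on the subgraphs `𝒢_k`, `𝒢_m`, with entrywise error at most
`2(K−1)(δ/μ) + (K−1)²(δ/μ)²`. -/
theorem lsgp_covariance_local_approximation
    {N K : ℕ} (V : Fin K → Finset (Fin N))
    (hdisj : ∀ k m, k ≠ m → Disjoint (V k) (V m))
    (hne : ∀ k, (V k).Nonempty)
    (hcover : ∀ i : Fin N, ∃ k, i ∈ V k)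
    (g : Fin K → Fin N → ℝ)
    (δ μ γ : ℝ) (hδ : 0 < δ) (hμ : 0 < μ) (hγ : 0 < γ)
    (hoff : ∀ k m, k ≠ m → ∀ x j,
      |(selMatrix (V k) * Matrix.diagonal (g m)) x j| ≤ δ * selMatrix (V k) x j)
    (hlow : ∀ k x j,
      μ * selMatrix (V k) x j ≤ (selMatrix (V k) * Matrix.diagonal (g k)) x j)
    (hhigh : ∀ k x j,
      (selMatrix (V k) * Matrix.diagonal (g k)) x j ≤ γ * selMatrix (V k) x j)
    (u : Fin N → Fin N → ℝ) (hu : ∀ i, ∑ j, (u i j) ^ 2 = 1)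
    (h : Fin K → Fin N → ℝ) (hh : ∀ k, ∑ i, (h k i) ^ 2 = 1)
    (Ckm : Fin K → Fin K → Matrix (Fin N) (Fin N) ℝ)
    (hCkm : ∀ k m, Ckm k m = ∑ i, (h k i * h m i) • Matrix.vecMulVec (u i) (u i))
    (Cx : Matrix (Fin N) (Fin N) ℝ)
    (hCx : Cx = ∑ k, ∑ m, Matrix.diagonal (g k) * Ckm k m * (Matrix.diagonal (g m))ᵀ) :
    ∀ k m : Fin K, ∀ x y,
      |(selMatrix (V k) * Matrix.diagonal (fun i => (g k i)⁻¹) * Cx *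
          (Matrix.diagonal (fun i => (g m i)⁻¹))ᵀ * (selMatrix (V m))ᵀ
        - selMatrix (V k) * Ckm k m * (selMatrix (V m))ᵀ) x y|
      ≤ 2 * ((K : ℝ) - 1) * (δ / μ) + ((K : ℝ) - 1) ^ 2 * (δ / μ) ^ 2 := by
  intro k m x y
  set x0 : Fin N := (x : Fin N) with hx0def
  set y0 : Fin N := (y : Fin N) with hy0def
  -- scalar facts about g
  have hg_low : ∀ (a : Fin K) (i : Fin N) (hi : i ∈ V a), μ ≤ g a i := by
    intro a i hi
    have := hlow a ⟨i, hi⟩ i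
    simpa [selMatrix, Matrix.mul_diagonal] using this
  have hg_off : ∀ (a b : Fin K), a ≠ b → ∀ (i : Fin N) (hi : i ∈ V a), |g b i| ≤ δ := by
    intro a b hab i hi
    have := hoff a b hab ⟨i, hi⟩ i
    simpa [selMatrix, Matrix.mul_diagonal] using this
  have hgkx : μ ≤ g k x0 := hg_low k x0 x.2
  have hgmy : μ ≤ g m y0 := hg_low m y0 y.2
  have hgkx0 : g k x0 ≠ 0 := ne_of_gt (lt_of_lt_of_le hμ hgkx)
  have hgmy0 : g m y0 ≠ 0 := ne_of_gt (lt_of_lt_of_le hμ hgmy)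
  -- bound on entries of Ckm
  have hCbound : ∀ a b : Fin K, |Ckm a b x0 y0| ≤ 1 := by
    intro a b
    have he : Ckm a b x0 y0 = ∑ i, (h a i * h b i) * (u i x0 * u i y0) := by
      rw [hCkm]
      simp [Matrix.sum_apply, Matrix.vecMulVec_apply, mul_comm]
    rw [he]
    exact abs_sum_prod_le_one u hu (h a) (h b) (hh a) (hh b) x0 y0
  -- entry computations
  have e1 : (selMatrix (V k) * Matrix.diagonal (fun i => (g k i)⁻¹) * Cx *
          (Matrix.diagonal (fun i => (g m i)⁻¹))ᵀ * (selMatrix (V m))ᵀ) x y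
      = (g k x0)⁻¹ * Cx x0 y0 * (g m y0)⁻¹ := by
    rw [mul_selMatrixT, Matrix.diagonal_transpose, Matrix.mul_diagonal,
      Matrix.mul_assoc (selMatrix (V k)), selMatrix_mul, Matrix.diagonal_mul]
  have e2 : (selMatrix (V k) * Ckm k m * (selMatrix (V m))ᵀ) x y = Ckm k m x0 y0 := by
    rw [mul_selMatrixT, selMatrix_mul]
  have e3 : Cx x0 y0 = ∑ k', ∑ m', g k' x0 * Ckm k' m' x0 y0 * g m' y0 := by
    rw [hCx]
    simp [Matrix.sum_apply, Matrix.diagonal_transpose, Matrix.mul_diagonal,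
      Matrix.diagonal_mul]
  set q : ℝ := δ / μ with hqdef
  have hq : 0 ≤ q := le_of_lt (div_pos hδ hμ)
  set F : Fin K × Fin K → ℝ :=
    fun p => (g k x0)⁻¹ * g p.1 x0 * Ckm p.1 p.2 x0 y0 * (g p.2 y0 * (g m y0)⁻¹) with hFdef
  set B : Fin K × Fin K → ℝ :=
    fun p => (if p.1 = k then (1:ℝ) else q) * (if p.2 = m then (1:ℝ) else q) with hBdef
  have hsum : (g k x0)⁻¹ * Cx x0 y0 * (g m y0)⁻¹ = ∑ p : Fin K × Fin K, F p := by
    rw [e3, Fintype.sum_prod_type]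
    simp only [Finset.mul_sum, Finset.sum_mul]
    refine Finset.sum_congr rfl fun k' _ => Finset.sum_congr rfl fun m' _ => ?_
    simp only [hFdef]
    ring
  have hFkm : F (k, m) = Ckm k m x0 y0 := by
    simp only [hFdef]
    field_simp
  -- bound each off term
  have hinv : (g k x0)⁻¹ ≤ μ⁻¹ := by
    apply inv_anti₀ hμ hgkx
  have hinvy : (g m y0)⁻¹ ≤ μ⁻¹ := by
    apply inv_anti₀ hμ hgmy
  have hinvpos : 0 < (g k x0)⁻¹ := inv_pos.mpr (lt_of_lt_of_le hμ hgkx)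
  have hinvypos : 0 < (g m y0)⁻¹ := inv_pos.mpr (lt_of_lt_of_le hμ hgmy)
  have hc1 : ∀ k' : Fin K, |(g k x0)⁻¹ * g k' x0| ≤ (if k' = k then (1:ℝ) else q) := by
    intro k'
    by_cases hk' : k' = k
    · subst hk'
      simp [inv_mul_cancel₀ hgkx0]
    · simp only [hk', if_false]
      rw [abs_mul, abs_of_pos hinvpos]
      calc (g k x0)⁻¹ * |g k' x0| ≤ μ⁻¹ * δ := by
            apply mul_le_mul hinv (hg_off k k' (Ne.symm hk') x0 x.2) (abs_nonneg _)
              (le_of_lt (inv_pos.mpr hμ))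
        _ = q := by rw [hqdef]; field_simp
  have hc2 : ∀ m' : Fin K, |g m' y0 * (g m y0)⁻¹| ≤ (if m' = m then (1:ℝ) else q) := by
    intro m'
    by_cases hm' : m' = m
    · subst hm'
      simp [mul_inv_cancel₀ hgmy0]
    · simp only [hm', if_false]
      rw [abs_mul, abs_of_pos hinvypos]
      calc |g m' y0| * (g m y0)⁻¹ ≤ δ * μ⁻¹ := by
            apply mul_le_mul (hg_off m m' (Ne.symm hm') y0 y.2) hinvy
              (le_of_lt hinvypos) (le_of_lt hδ)
        _ = q := by rw [hqdef]; field_simp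
  have hFb : ∀ p : Fin K × Fin K, |F p| ≤ B p := by
    intro p
    have : F p = ((g k x0)⁻¹ * g p.1 x0) * Ckm p.1 p.2 x0 y0 * (g p.2 y0 * (g m y0)⁻¹) := by
      simp only [hFdef]
    rw [this, abs_mul, abs_mul]
    have h1 := hc1 p.1
    have h2 := hc2 p.2
    have h3 := hCbound p.1 p.2
    have hb1 : (0:ℝ) ≤ (if p.1 = k then (1:ℝ) else q) := by split <;> simp [hq]
    have hb2 : (0:ℝ) ≤ (if p.2 = m then (1:ℝ) else q) := by split <;> simp [hq]
    calc |(g k x0)⁻¹ * g p.1 x0| * |Ckm p.1 p.2 x0 y0| * |g p.2 y0 * (g m y0)⁻¹|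
        ≤ (if p.1 = k then (1:ℝ) else q) * 1 * (if p.2 = m then (1:ℝ) else q) := by
          apply mul_le_mul _ h2 (abs_nonneg _) (by positivity)
          exact mul_le_mul h1 h3 (abs_nonneg _) hb1
      _ = B p := by rw [hBdef]; ring
  -- sum of bounds
  have hBsum : ∑ p : Fin K × Fin K, B p = (1 + ((K:ℝ) - 1) * q) * (1 + ((K:ℝ) - 1) * q) := by
    have : ∑ p : Fin K × Fin K, B p
        = (∑ k' : Fin K, if k' = k then (1:ℝ) else q)
          * (∑ m' : Fin K, if m' = m then (1:ℝ) else q) := by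
      rw [Finset.sum_mul_sum, hBdef, Fintype.sum_prod_type]
    rw [this, sum_ite_eq_card k q, sum_ite_eq_card m q]
  have hBkm : B (k, m) = 1 := by simp [hBdef]
  -- main estimate
  rw [Matrix.sub_apply, e1, e2, hsum]
  have hdiff : ∑ p : Fin K × Fin K, F p - Ckm k m x0 y0
      = ∑ p ∈ Finset.univ.erase (k, m), F p := by
    rw [Finset.sum_erase_eq_sub (Finset.mem_univ (k, m)), hFkm]
  rw [hdiff]
  calc |∑ p ∈ Finset.univ.erase (k, m), F p|
      ≤ ∑ p ∈ Finset.univ.erase (k, m), |F p| := Finset.abs_sum_le_sum_abs _ _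
    _ ≤ ∑ p ∈ Finset.univ.erase (k, m), B p :=
        Finset.sum_le_sum fun p _ => hFb p
    _ = ∑ p : Fin K × Fin K, B p - B (k, m) :=
        Finset.sum_erase_eq_sub (Finset.mem_univ (k, m))
    _ = 2 * ((K : ℝ) - 1) * (δ / μ) + ((K : ℝ) - 1) ^ 2 * (δ / μ) ^ 2 := by
        rw [hBsum, hBkm, ← hqdef]
        ring
end

section
/- Let {1,…,N} be partitioned into K pairwise disjoint nonempty vertex sets V₁,…,V_K, let g₁,…,g_K ∈ ℝ^N with G_k = diag(g_k), and assume there exist constants δ, μ, γ > 0 such that |g_m(i)| ≤ δ for all i ∈ V_k with k ≠ m, and μ ≤ g_k(i) ≤ γ for all i ∈ V_k. Let u₁,…,u_N ∈ ℝ^N be an orthonormal set, let h₁,…,h_K ∈ ℝ^N with ‖h_k‖₂ = 1, and assume Σ_{i=1}^N |h_k(i) h_m(i)| ≤ ε for all k ≠ m, for some ε ≥ 0. Set C_{km} = Σ_{l=1}^N h_k(l) h_m(l) u_l u_lᵀ and C_x = Σ_{k=1}^K Σ_{m=1}^K G_k C_{km} G_mᵀ. Then (1/(γ⁴ N²)) Σ_{k=1}^K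 Σ_{m≠k} Σ_{(i,j) ∈ V_k × V_m} |C_x(i,j)|² ≤ (2/N) K (K−1) ε² + (2/N²) · (Σ_{k=1}^K Σ_{m≠k} |V_k| · |V_m|) · (2(K−1)(δ/μ) + (K−1)²(δ/μ)²)². -/
/-!
For `i ∈ V k`, `j ∈ V m` with `k ≠ m`, the entry `Cx i j = ∑ k' m', g k' i * Ckm k' m' i j * g m' j`
splits into the main term `g k i * Ckm k m i j * g m j` and the rest. Orthonormality of the `u l`
and `‖h k‖ = 1` give `|Ckm k' m' i j| ≤ 1`, so localization bounds the rest by `γ² B` with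
`B = 2(K-1)(δ/μ) + (K-1)²(δ/μ)²`, while the main term is at most `γ² |Ckm k m i j|`. Hence
`|Cx i j|² ≤ 2γ⁴ (Ckm k m i j ² + B²)`, and summing over `V k × V m` costs at most
`‖Ckm k m‖_F² = ∑ l, (h k l * h m l)² ≤ ε²` for the first part.
-/

open Matrix Finset

section SpectralMatrix

variable {n : Type*} [Fintype n]

theorem abs_le_one_of_dotProduct_self_eq_one {v : n → ℝ} (hv : v ⬝ᵥ v = 1) (i : n) :
    |v i| ≤ 1 := by
  rw [← sq_le_one_iff_abs_le_one, ← hv, dotProduct]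
  simpa only [sq] using single_le_sum (fun j _ ↦ mul_self_nonneg (v j)) (mem_univ i)

theorem sum_abs_mul_le_one {x y : n → ℝ} (hx : ∑ i, x i ^ 2 = 1) (hy : ∑ i, y i ^ 2 = 1) :
    ∑ i, |x i * y i| ≤ 1 := by
  have h2 : ∀ i, 2 * |x i * y i| ≤ x i ^ 2 + y i ^ 2 := fun i ↦ by
    simpa only [abs_mul, mul_assoc, sq_abs] using two_mul_le_add_sq |x i| |y i|
  have := sum_le_sum fun i (_ : i ∈ univ) ↦ h2 i
  rw [← mul_sum, sum_add_distrib, hx, hy] at this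
  linarith

variable {u : n → n → ℝ}

theorem sum_smul_vecMulVec_self_apply (c : n → ℝ) (i j : n) :
    (∑ l, c l • vecMulVec (u l) (u l)) i j = ∑ l, c l * (u l i * u l j) := by
  simp [Matrix.sum_apply, vecMulVec_apply]

theorem sum_smul_vecMulVec_self_eq [DecidableEq n] (c : n → ℝ) :
    ∑ l, c l • vecMulVec (u l) (u l) = (of u)ᵀ * diagonal c * of u := by
  ext i j
  rw [mul_apply]
  simp [sum_smul_vecMulVec_self_apply, Matrix.mul_diagonal, mul_comm, mul_left_comm]

theorem abs_sum_smul_vecMulVec_self_apply_le (hu : ∀ l, u l ⬝ᵥ u l = 1) (c : n → ℝ) (i j : n) :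
    |(∑ l, c l • vecMulVec (u l) (u l)) i j| ≤ ∑ l, |c l| := by
  rw [sum_smul_vecMulVec_self_apply]
  refine (abs_sum_le_sum_abs _ _).trans (sum_le_sum fun l _ ↦ ?_)
  rw [abs_mul, abs_mul]
  exact mul_le_of_le_one_right (abs_nonneg _) <| mul_le_one₀
    (abs_le_one_of_dotProduct_self_eq_one (hu l) i) (abs_nonneg _)
    (abs_le_one_of_dotProduct_self_eq_one (hu l) j)

theorem sum_sum_sq_apply_eq_trace (A : Matrix n n ℝ) :
    ∑ i, ∑ j, A i j ^ 2 = trace (A * Aᵀ) := by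
  simp [trace, mul_apply, sq]

theorem sum_sum_sq_sum_smul_vecMulVec_self_apply [DecidableEq n]
    (hu : ∀ i j, u i ⬝ᵥ u j = if i = j then 1 else 0) (c : n → ℝ) :
    ∑ i, ∑ j, (∑ l, c l • vecMulVec (u l) (u l)) i j ^ 2 = ∑ l, c l ^ 2 := by
  have hU : of u * (of u)ᵀ = 1 := by
    ext i j
    simpa [mul_apply, one_apply, dotProduct] using hu i j
  rw [sum_sum_sq_apply_eq_trace, sum_smul_vecMulVec_self_eq]
  calc trace ((of u)ᵀ * diagonal c * of u * ((of u)ᵀ * diagonal c * of u)ᵀ)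
      = trace ((of u)ᵀ * (diagonal c * diagonal c * of u)) := by
        simp only [transpose_mul, transpose_transpose, diagonal_transpose, Matrix.mul_assoc]
        rw [← Matrix.mul_assoc (of u) (of u)ᵀ, hU, Matrix.one_mul]
    _ = trace (diagonal c * diagonal c * (of u * (of u)ᵀ)) := by
        rw [trace_mul_comm, Matrix.mul_assoc]
    _ = ∑ l, c l ^ 2 := by
        rw [hU, Matrix.mul_one]
        simp [sq]

end SpectralMatrix

section OffDiagonal

variable {ι : Type*} [Fintype ι] [DecidableEq ι]

theorem abs_sum_sum_mul_mul_sub_le {x y : ι → ℝ} {c : ι → ι → ℝ} (hc : ∀ k m, |c k m| ≤ 1)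
    (a b : ι) :
    |∑ k, ∑ m, x k * c k m * y m - x a * c a b * y b|
      ≤ (∑ k, |x k|) * (∑ m, |y m|) - |x a| * |y b| := by
  calc |∑ k, ∑ m, x k * c k m * y m - x a * c a b * y b|
      = |∑ p ∈ univ.erase (a, b), x p.1 * c p.1 p.2 * y p.2| := by
        rw [sum_erase_eq_sub (mem_univ _), Fintype.sum_prod_type]
    _ ≤ ∑ p ∈ univ.erase (a, b), |x p.1| * |y p.2| := by
        refine (abs_sum_le_sum_abs _ _).trans (sum_le_sum fun p _ ↦ ?_)
        rw [abs_mul, abs_mul]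
        gcongr
        exact mul_le_of_le_one_right (abs_nonneg _) (hc _ _)
    _ = (∑ k, |x k|) * (∑ m, |y m|) - |x a| * |y b| := by
        rw [sum_erase_eq_sub (mem_univ _), Fintype.sum_prod_type, sum_mul_sum]

theorem sum_abs_le_abs_add_card_sub_one_mul {x : ι → ℝ} {δ : ℝ} (a : ι)
    (hx : ∀ k ≠ a, |x k| ≤ δ) :
    ∑ k, |x k| ≤ |x a| + (Fintype.card ι - 1) * δ := by
  rw [← add_sum_erase _ _ (mem_univ a)]
  gcongr
  have hcard : ((univ.erase a).card : ℝ) = Fintype.card ι - 1 := by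
    rw [card_erase_of_mem (mem_univ a), card_univ, Nat.cast_pred (Fintype.card_pos_iff.mpr ⟨a⟩)]
  calc ∑ k ∈ univ.erase a, |x k| ≤ (univ.erase a).card • δ :=
        sum_le_card_nsmul _ _ _ fun k hk ↦ hx k (ne_of_mem_erase hk)
    _ = (Fintype.card ι - 1) * δ := by rw [nsmul_eq_mul, hcard]

theorem abs_sum_sum_mul_mul_le {x y : ι → ℝ} {c : ι → ι → ℝ} {γ δ μ : ℝ}
    (hc : ∀ k m, |c k m| ≤ 1) (hδ : 0 ≤ δ) (hμ : 0 < μ) (hμγ : μ ≤ γ) {a b : ι}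
    (hxa : |x a| ≤ γ) (hyb : |y b| ≤ γ) (hx : ∀ k ≠ a, |x k| ≤ δ) (hy : ∀ m ≠ b, |y m| ≤ δ) :
    |∑ k, ∑ m, x k * c k m * y m|
      ≤ γ ^ 2 * (|c a b| + (2 * (Fintype.card ι - 1) * (δ / μ)
          + (Fintype.card ι - 1) ^ 2 * (δ / μ) ^ 2)) := by
  set n : ℝ := Fintype.card ι - 1
  have hn : 0 ≤ n := sub_nonneg.mpr (Nat.one_le_cast.mpr (Fintype.card_pos_iff.mpr ⟨a⟩))
  have hγ : 0 ≤ γ := hμ.le.trans hμγ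
  have hδγ : δ ≤ γ * (δ / μ) := by
    rw [mul_div_left_comm]
    exact le_mul_of_one_le_right hδ ((one_le_div hμ).mpr hμγ)
  have hmain : |x a * c a b * y b| ≤ γ ^ 2 * |c a b| := by
    rw [abs_mul, abs_mul, mul_right_comm, sq]
    gcongr
  have hrest : |∑ k, ∑ m, x k * c k m * y m - x a * c a b * y b|
      ≤ 2 * n * γ * δ + (n * δ) ^ 2 := by
    refine (abs_sum_sum_mul_mul_sub_le hc a b).trans ?_
    have hX := sum_abs_le_abs_add_card_sub_one_mul a hx
    have hY := sum_abs_le_abs_add_card_sub_one_mul b hy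
    have hXY := mul_le_mul hX hY (sum_nonneg fun m _ ↦ abs_nonneg (y m))
      (add_nonneg (abs_nonneg _) (mul_nonneg hn hδ))
    nlinarith [abs_nonneg (x a), abs_nonneg (y b), mul_nonneg hn hδ]
  calc |∑ k, ∑ m, x k * c k m * y m|
      ≤ |x a * c a b * y b| + |∑ k, ∑ m, x k * c k m * y m - x a * c a b * y b| :=
        by linarith [abs_sub_abs_le_abs_sub (∑ k, ∑ m, x k * c k m * y m) (x a * c a b * y b)]
    _ ≤ γ ^ 2 * |c a b| + (2 * n * γ * (γ * (δ / μ)) + (n * (γ * (δ / μ))) ^ 2) := by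
        gcongr
        exact hrest.trans (by gcongr)
    _ = _ := by ring

theorem sum_sum_erase_const (r : ℝ) :
    ∑ k : ι, ∑ _m ∈ univ.erase k, r = Fintype.card ι * (Fintype.card ι - 1) * r := by
  rcases (Fintype.card ι).eq_zero_or_pos with h | h
  · simp [Fintype.card_eq_zero_iff.mp h]
  · simp [card_erase_of_mem, Nat.cast_pred h, mul_assoc]

theorem inv_mul_sum_sum_erase_le {S : ι → ι → ℝ} {c : ι → ℝ} {γ ε β : ℝ} (N : ℕ) (hγ : 0 < γ)
    (hS : ∀ k m, k ≠ m → S k m ≤ 2 * γ ^ 4 * (ε ^ 2 + c k * c m * β ^ 2)) :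
    1 / (γ ^ 4 * (N : ℝ) ^ 2) * ∑ k, ∑ m ∈ univ.erase k, S k m
      ≤ 2 / (N : ℝ) * Fintype.card ι * (Fintype.card ι - 1) * ε ^ 2
        + 2 / (N : ℝ) ^ 2 * (∑ k, ∑ m ∈ univ.erase k, c k * c m) * β ^ 2 := by
  set E := ∑ k : ι, ∑ _m ∈ univ.erase k, ε ^ 2
  set P := ∑ k, ∑ m ∈ univ.erase k, c k * c m
  have hsum : ∑ k, ∑ m ∈ univ.erase k, S k m ≤ γ ^ 4 * (2 * E + 2 * P * β ^ 2) := by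
    calc ∑ k, ∑ m ∈ univ.erase k, S k m
        ≤ ∑ k, ∑ m ∈ univ.erase k, 2 * γ ^ 4 * (ε ^ 2 + c k * c m * β ^ 2) := by
          gcongr with k _ m hm
          exact hS k m (ne_of_mem_erase hm).symm
      _ = γ ^ 4 * (2 * E + 2 * P * β ^ 2) := by
          simp only [E, P, mul_add, sum_add_distrib, ← mul_sum, ← sum_mul]
          ring
  have hN : (2 : ℝ) / N ^ 2 ≤ 2 / N := by
    rw [sq, ← div_div, div_eq_mul_inv]
    exact mul_le_of_le_one_right (by positivity) (Nat.cast_inv_le_one N)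
  calc 1 / (γ ^ 4 * (N : ℝ) ^ 2) * ∑ k, ∑ m ∈ univ.erase k, S k m
      ≤ 1 / (γ ^ 4 * (N : ℝ) ^ 2) * (γ ^ 4 * (2 * E + 2 * P * β ^ 2)) := by gcongr
    _ = 2 / (N : ℝ) ^ 2 * E + 2 / (N : ℝ) ^ 2 * P * β ^ 2 := by
        rw [one_div, mul_inv, mul_comm (γ ^ 4)⁻¹, mul_assoc,
          inv_mul_cancel_left₀ (pow_pos hγ 4).ne']
        ring
    _ ≤ 2 / (N : ℝ) * E + 2 / (N : ℝ) ^ 2 * P * β ^ 2 := by gcongr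
    _ = _ := by
        rw [show E = Fintype.card ι * (Fintype.card ι - 1) * ε ^ 2 from sum_sum_erase_const _]
        ring

end OffDiagonal

theorem sum_sq_le_sq_of_sum_abs_le {ι : Type*} {s : Finset ι} {c : ι → ℝ} {ε : ℝ}
    (hc : ∑ i ∈ s, |c i| ≤ ε) : ∑ i ∈ s, c i ^ 2 ≤ ε ^ 2 := by
  calc ∑ i ∈ s, c i ^ 2 = ∑ i ∈ s, |c i| ^ 2 := by simp only [sq_abs]
    _ ≤ (∑ i ∈ s, |c i|) ^ 2 := sum_sq_le_sq_sum_of_nonneg fun i _ ↦ abs_nonneg (c i)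
    _ ≤ ε ^ 2 := pow_le_pow_left₀ (sum_nonneg fun i _ ↦ abs_nonneg (c i)) hc 2

theorem sum_sum_sq_abs_le_of_abs_le {n : Type*} [Fintype n] {F A : n → n → ℝ} {s t : Finset n}
    {γ β ε : ℝ} (hF : ∀ i ∈ s, ∀ j ∈ t, |F i j| ≤ γ ^ 2 * (|A i j| + β))
    (hA : ∑ i, ∑ j, A i j ^ 2 ≤ ε ^ 2) :
    ∑ i ∈ s, ∑ j ∈ t, |F i j| ^ 2 ≤ 2 * γ ^ 4 * (ε ^ 2 + s.card * t.card * β ^ 2) := by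
  have hsub : ∑ i ∈ s, ∑ j ∈ t, A i j ^ 2 ≤ ε ^ 2 := by
    refine le_trans ?_ hA
    refine (sum_le_sum fun i _ ↦ sum_le_sum_of_subset_of_nonneg (subset_univ t)
      fun j _ _ ↦ sq_nonneg (A i j)).trans ?_
    exact sum_le_sum_of_subset_of_nonneg (subset_univ s)
      fun i _ _ ↦ sum_nonneg fun j _ ↦ sq_nonneg (A i j)
  calc ∑ i ∈ s, ∑ j ∈ t, |F i j| ^ 2
      ≤ ∑ i ∈ s, ∑ j ∈ t, 2 * γ ^ 4 * (A i j ^ 2 + β ^ 2) := by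
        gcongr with i hi j hj
        calc |F i j| ^ 2 ≤ (γ ^ 2 * (|A i j| + β)) ^ 2 :=
              pow_le_pow_left₀ (abs_nonneg _) (hF i hi j hj) 2
          _ = γ ^ 4 * (|A i j| + β) ^ 2 := by ring
          _ ≤ γ ^ 4 * (2 * (|A i j| ^ 2 + β ^ 2)) := by gcongr; exact add_sq_le
          _ = 2 * γ ^ 4 * (A i j ^ 2 + β ^ 2) := by rw [sq_abs]; ring
    _ = 2 * γ ^ 4 * (∑ i ∈ s, ∑ j ∈ t, A i j ^ 2 + s.card * t.card * β ^ 2) := by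
        simp only [← mul_sum, sum_add_distrib, sum_const, nsmul_eq_mul]
        ring
    _ ≤ 2 * γ ^ 4 * (ε ^ 2 + s.card * t.card * β ^ 2) := by gcongr

theorem sum_sum_diagonal_mul_mul_transpose_diagonal_apply {R κ n : Type*} [CommSemiring R]
    [Fintype κ] [Fintype n] [DecidableEq n] (x : κ → n → R) (A : κ → κ → Matrix n n R) (i j : n) :
    (∑ k, ∑ m, diagonal (x k) * A k m * (diagonal (x m))ᵀ) i j
      = ∑ k, ∑ m, x k i * A k m i j * x m j := by
  simp [Matrix.sum_apply, diagonal_mul, mul_diagonal]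

theorem lsgp_average_cross_covariance_bound_general
    {N K : ℕ} (V : Fin K → Finset (Fin N))
    (g : Fin K → Fin N → ℝ)
    (δ μ γ : ℝ) (hδ : 0 < δ) (hμ : 0 < μ) (hγ : 0 < γ)
    (hoff : ∀ k m, k ≠ m → ∀ i ∈ V k, |g m i| ≤ δ)
    (hlow : ∀ k, ∀ i ∈ V k, μ ≤ g k i)
    (hhigh : ∀ k, ∀ i ∈ V k, g k i ≤ γ)
    (u : Fin N → Fin N → ℝ)
    (hu : ∀ i j, u i ⬝ᵥ u j = if i = j then (1 : ℝ) else 0)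
    (h : Fin K → Fin N → ℝ) (hh : ∀ k, ∑ i, (h k i) ^ 2 = 1)
    (ε : ℝ)
    (hsep : ∀ k m, k ≠ m → ∑ i, |h k i * h m i| ≤ ε)
    (Ckm : Fin K → Fin K → Matrix (Fin N) (Fin N) ℝ)
    (hCkm : ∀ k m, Ckm k m = ∑ l, (h k l * h m l) • Matrix.vecMulVec (u l) (u l))
    (Cx : Matrix (Fin N) (Fin N) ℝ)
    (hCx : Cx = ∑ k, ∑ m, Matrix.diagonal (g k) * Ckm k m * (Matrix.diagonal (g m))ᵀ) :
    (1 / (γ ^ 4 * (N : ℝ) ^ 2)) *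
        ∑ k, ∑ m ∈ Finset.univ.erase k, ∑ i ∈ V k, ∑ j ∈ V m, |Cx i j| ^ 2
      ≤ (2 / (N : ℝ)) * K * ((K : ℝ) - 1) * ε ^ 2
        + (2 / (N : ℝ) ^ 2) *
            (∑ k, ∑ m ∈ Finset.univ.erase k, ((V k).card : ℝ) * ((V m).card : ℝ)) *
            (2 * ((K : ℝ) - 1) * (δ / μ) + ((K : ℝ) - 1) ^ 2 * (δ / μ) ^ 2) ^ 2 := by
  set B := 2 * ((K : ℝ) - 1) * (δ / μ) + ((K : ℝ) - 1) ^ 2 * (δ / μ) ^ 2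
  have hC : ∀ k m i j, |Ckm k m i j| ≤ 1 := fun k m i j ↦ by
    rw [hCkm]
    exact (abs_sum_smul_vecMulVec_self_apply_le (fun l ↦ by simpa using hu l l) _ i j).trans
      (sum_abs_mul_le_one (hh k) (hh m))
  have hentry : ∀ k m, ∀ i ∈ V k, ∀ j ∈ V m, |Cx i j| ≤ γ ^ 2 * (|Ckm k m i j| + B) := by
    intro k m i hi j hj
    have habs : ∀ k, ∀ i ∈ V k, |g k i| ≤ γ := fun k i hi ↦
      abs_le.mpr ⟨by linarith [hlow k i hi], hhigh k i hi⟩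
    rw [hCx, sum_sum_diagonal_mul_mul_transpose_diagonal_apply]
    simpa only [Fintype.card_fin] using abs_sum_sum_mul_mul_le (fun k m ↦ hC k m i j) hδ.le hμ
      ((hlow k i hi).trans (hhigh k i hi)) (habs k i hi) (habs m j hj)
      (fun k' hk' ↦ hoff k k' hk'.symm i hi) (fun m' hm' ↦ hoff m m' hm'.symm j hj)
  have hpair : ∀ k m, k ≠ m → ∑ i ∈ V k, ∑ j ∈ V m, |Cx i j| ^ 2
      ≤ 2 * γ ^ 4 * (ε ^ 2 + (V k).card * (V m).card * B ^ 2) := fun k m hkm ↦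
    sum_sum_sq_abs_le_of_abs_le (hentry k m) <| by
      rw [hCkm, sum_sum_sq_sum_smul_vecMulVec_self_apply hu]
      exact sum_sq_le_sq_of_sum_abs_le (hsep k m hkm)
  simpa only [Fintype.card_fin] using inv_mul_sum_sum_erase_le N hγ hpair

/-- Theorem 3: under the membership localization and spectral separation assumptions,
the average squared cross-covariance of the LSGP `x` across different subgraphs is
bounded by `(2/N) K(K−1) ε² + (2/N²) |⋃_{k≠m} V_k × V_m| (2(K−1)(δ/μ) + (K−1)²(δ/μ)²)²`. -/
theorem lsgp_average_cross_covariance_bound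
    {N K : ℕ} (V : Fin K → Finset (Fin N))
    (hdisj : ∀ k m, k ≠ m → Disjoint (V k) (V m))
    (hne : ∀ k, (V k).Nonempty)
    (hcover : ∀ i : Fin N, ∃ k, i ∈ V k)
    (g : Fin K → Fin N → ℝ)
    (δ μ γ : ℝ) (hδ : 0 < δ) (hμ : 0 < μ) (hγ : 0 < γ)
    (hoff : ∀ k m, k ≠ m → ∀ i ∈ V k, |g m i| ≤ δ)
    (hlow : ∀ k, ∀ i ∈ V k, μ ≤ g k i)
    (hhigh : ∀ k, ∀ i ∈ V k, g k i ≤ γ)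
    (u : Fin N → Fin N → ℝ)
    (hu : ∀ i j, u i ⬝ᵥ u j = if i = j then (1 : ℝ) else 0)
    (h : Fin K → Fin N → ℝ) (hh : ∀ k, ∑ i, (h k i) ^ 2 = 1)
    (ε : ℝ) (hε : 0 ≤ ε)
    (hsep : ∀ k m, k ≠ m → ∑ i, |h k i * h m i| ≤ ε)
    (Ckm : Fin K → Fin K → Matrix (Fin N) (Fin N) ℝ)
    (hCkm : ∀ k m, Ckm k m = ∑ l, (h k l * h m l) • Matrix.vecMulVec (u l) (u l))
    (Cx : Matrix (Fin N) (Fin N) ℝ)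
    (hCx : Cx = ∑ k, ∑ m, Matrix.diagonal (g k) * Ckm k m * (Matrix.diagonal (g m))ᵀ) :
    (1 / (γ ^ 4 * (N : ℝ) ^ 2)) *
        ∑ k, ∑ m ∈ Finset.univ.erase k, ∑ i ∈ V k, ∑ j ∈ V m, |Cx i j| ^ 2
      ≤ (2 / (N : ℝ)) * K * ((K : ℝ) - 1) * ε ^ 2
        + (2 / (N : ℝ) ^ 2) *
            (∑ k, ∑ m ∈ Finset.univ.erase k, ((V k).card : ℝ) * ((V m).card : ℝ)) *
            (2 * ((K : ℝ) - 1) * (δ / μ) + ((K : ℝ) - 1) ^ 2 * (δ / μ) ^ 2) ^ 2 :=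
  lsgp_average_cross_covariance_bound_general V g δ μ γ hδ hμ hγ hoff hlow hhigh u hu h hh ε hsep
    Ckm hCkm Cx hCx
end

section
/- Let W ∈ ℝ^{N×N} be a symmetric nonnegative weight matrix whose associated unweighted graph (i ∼ j iff W(i,j) ≠ 0) is connected, with minimum edge weight w_min > 0 and unweighted geodesic distance D(i,j). Let u₁,…,u_N ∈ ℝ^N be an orthonormal set, and for n = 1,…,N let T_n = Σ_{i∼j} W(i,j)(u_n(i) − u_n(j))² be the total variation of u_n. Let {1,…,N} be partitioned into K pairwise disjoint nonempty vertex sets V₁,…,V_K, let g₁,…,g_K ∈ ℝ^N with G_k = diag(g_k), and assume there exist δ, μ, γ > 0 such that |g_m(i)| ≤ δ for all i ∈ V_k with k ≠ m, and μ ≤ g_k(i) ≤ γ for all i ∈ V_k. Let h₁,…,h_K ∈ ℝ^N with ‖h_k‖₂ = 1 and, for some cutoff κ ∈ {1,…,N}, h_k(i) = 0 whenever i > κ, for all k. Set C_{km} = Σ_{n=1}^N h_k(n) h_m(n) u_n u_nᵀ, C_{x_k} = C_{kk}, C_x = Σ_{k=1}^K Σ_{m=1}^K G_k C_{km} G_mᵀ,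 and σ_k² = Σ_{i ∈ V_k} C_{x_k}(i,i). Then (1/(N² μ²)) Σ_{k=1}^K Σ_{(i,j) ∈ V_k × V_k} |C_x(i,j)| ≥ (1/N²) Σ_{k=1}^K |V_k| σ_k² − (1/(2 N² w_min)) Σ_{k=1}^K Σ_{(i,j) ∈ V_k × V_k} D(i,j)² · (Σ_{n=1}^κ T_n) − (1/N²) (Σ_{k=1}^K |V_k|²) · (2(K−1)(δ/μ) + (K−1)²(δ/μ)²). -/
/-!
Fix `a, b` in the same block `V k`. Expanding `C_x(a,b) = ∑_{m,m'} g_m(a) C_{mm'}(a,b) g_{m'}(b)`,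
where `|C_{mm'}(a,b)| ≤ 1` by Cauchy–Schwarz, the off-diagonal memberships are at most `δ/μ` times
the diagonal ones, so `|C_x(a,b)| ≥ μ² (|C_{kk}(a,b)| - E)` with `E = (1 + (K-1)δ/μ)² - 1`.
On the other hand `C_{kk}(a,a) + C_{kk}(b,b) - 2 C_{kk}(a,b) = ∑_n h_k(n)² (u_n(a) - u_n(b))²`;
Cauchy–Schwarz along a shortest path from `a` to `b` gives
`w_min (u_n(a) - u_n(b))² ≤ D(a,b) T_n`, and band-limitedness cuts the sum down to `n < κ`.
Summing the resulting entrywise bound over `a, b ∈ V k` and over `k` gives the theorem.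
-/

open Matrix Finset

namespace SimpleGraph.Walk

variable {V : Type*} {G : SimpleGraph V}

theorem sq_sub_le_length_mul_sum_darts (f : V → ℝ) {i j : V} (p : G.Walk i j) :
    (f i - f j) ^ 2 ≤ p.length * (p.darts.map fun d => (f d.fst - f d.snd) ^ 2).sum := by
  induction p with
  | nil => simp
  | @cons i b j _ q ih =>
    set Q := (q.darts.map fun d => (f d.fst - f d.snd) ^ 2).sum
    have hQ : 0 ≤ Q := List.sum_nonneg (by simp [sq_nonneg])
    have hL : (0 : ℝ) ≤ q.length := q.length.cast_nonneg
    simp only [darts_cons, length_cons, List.map_cons, List.sum_cons, Nat.cast_succ]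
    -- Cauchy–Schwarz step, with `a = f i - f b`, `s = f b - f j`, `L = q.length`:
    -- `L (L a² - 2 a s + Q) = (L a - s)² + (L Q - s²) ≥ 0`
    rcases hL.eq_or_lt with hL0 | hLpos
    · rw [← hL0] at ih ⊢
      have : f b - f j = 0 := by simpa using ih
      nlinarith [sq_nonneg (f i - f b)]
    · nlinarith [sq_nonneg (q.length * (f i - f b) - (f b - f j)), mul_pos hLpos hLpos]

variable [LinearOrder V] [Fintype V]

theorem sum_darts_le_sum_lt_of_isPath {i j : V} {p : G.Walk i j} (hp : p.IsPath)
    (F : V → V → ℝ) (hF : ∀ a b, 0 ≤ F a b) (hFsymm : ∀ a b, F a b = F b a) :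
    (p.darts.map fun d => F d.fst d.snd).sum ≤ ∑ a, ∑ b, if a < b then F a b else 0 := by
  let sort : G.Dart → V × V := fun d => (min d.fst d.snd, max d.fst d.snd)
  let F' : V × V → ℝ := fun q => if q.1 < q.2 then F q.1 q.2 else 0
  have hF' : ∀ d : G.Dart, F d.fst d.snd = F' (sort d) := by
    intro d
    rcases lt_or_gt_of_ne d.fst_ne_snd with h | h
    · simp [F', sort, h, min_eq_left h.le, max_eq_right h.le]
    · simp [F', sort, h, min_eq_right h.le, max_eq_left h.le, hFsymm d.fst]
  have hnodup : (p.darts.map sort).Nodup := by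
    have hedges : (p.darts.map sort).map (fun q => s(q.1, q.2)) = p.edges := by
      rw [List.map_map, edges]
      refine List.map_congr_left fun d _ => ?_
      rcases le_total d.fst d.snd with h | h
      · simp [sort, min_eq_left h, max_eq_right h, Dart.edge]
      · simp [sort, min_eq_right h, max_eq_left h, Dart.edge, Sym2.eq_swap]
    exact List.Nodup.of_map _ (hedges ▸ hp.edges_nodup)
  calc (p.darts.map fun d => F d.fst d.snd).sum
      = ((p.darts.map sort).map F').sum := by simp only [List.map_map, Function.comp_def, hF']
    _ = ∑ q ∈ (p.darts.map sort).toFinset, F' q := (List.sum_toFinset F' hnodup).symm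
    _ ≤ ∑ q, F' q := sum_le_univ_sum_of_nonneg fun q => by
        simp only [F']; split_ifs <;> simp [hF]
    _ = ∑ a, ∑ b, if a < b then F a b else 0 := Fintype.sum_prod_type _

end SimpleGraph.Walk

section TotalVariation

variable {α : Type*} [Fintype α] [LinearOrder α]

noncomputable def totalVariation (W : Matrix α α ℝ) (f : α → ℝ) : ℝ :=
  ∑ i, ∑ j, if i < j ∧ W i j ≠ 0 then W i j * (f i - f j) ^ 2 else 0

variable {W : Matrix α α ℝ}

theorem totalVariation_eq_sum_lt (f : α → ℝ) :
    totalVariation W f = ∑ i, ∑ j, if i < j then W i j * (f i - f j) ^ 2 else 0 := by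
  unfold totalVariation
  refine sum_congr rfl fun i _ => sum_congr rfl fun j _ => ?_
  by_cases hW : W i j = 0 <;> simp [hW]

theorem totalVariation_nonneg (hW : ∀ i j, 0 ≤ W i j) (f : α → ℝ) : 0 ≤ totalVariation W f :=
  sum_nonneg fun i _ => sum_nonneg fun j _ => by
    split_ifs
    exacts [mul_nonneg (hW i j) (sq_nonneg _), le_rfl]

theorem mul_sq_sub_le_dist_mul_totalVariation {G : SimpleGraph α} (hconn : G.Connected)
    (hsymm : W.IsSymm) (hW : ∀ i j, 0 ≤ W i j) {wmin : ℝ} (hwmin : 0 ≤ wmin)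
    (hadj : ∀ i j, G.Adj i j → wmin ≤ W i j) (f : α → ℝ) (i j : α) :
    wmin * (f i - f j) ^ 2 ≤ G.dist i j * totalVariation W f := by
  obtain ⟨p, hp, hlen⟩ := hconn.exists_path_of_dist i j
  have hdarts : wmin * (p.darts.map fun d => (f d.fst - f d.snd) ^ 2).sum
      ≤ totalVariation W f := by
    rw [← List.sum_map_mul_left, totalVariation_eq_sum_lt]
    calc (p.darts.map fun d => wmin * (f d.fst - f d.snd) ^ 2).sum
        ≤ (p.darts.map fun d => W d.fst d.snd * (f d.fst - f d.snd) ^ 2).sum :=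
          List.sum_le_sum fun d _ => mul_le_mul_of_nonneg_right (hadj _ _ d.adj) (sq_nonneg _)
      _ ≤ _ := p.sum_darts_le_sum_lt_of_isPath hp (fun a b => W a b * (f a - f b) ^ 2)
          (fun a b => mul_nonneg (hW a b) (sq_nonneg _))
          (fun a b => by rw [hsymm.apply a b, ← neg_sub, neg_sq])
  calc wmin * (f i - f j) ^ 2
      ≤ wmin * (p.length * (p.darts.map fun d => (f d.fst - f d.snd) ^ 2).sum) :=
        mul_le_mul_of_nonneg_left (p.sq_sub_le_length_mul_sum_darts f) hwmin
    _ = p.length * (wmin * (p.darts.map fun d => (f d.fst - f d.snd) ^ 2).sum) := by ring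
    _ ≤ G.dist i j * totalVariation W f := by
        rw [hlen]; exact mul_le_mul_of_nonneg_left hdarts (Nat.cast_nonneg _)

end TotalVariation

section SpectralCovariance

variable {ι : Type*} [Fintype ι]

noncomputable def spectralCov (u : ι → ι → ℝ) (h h' : ι → ℝ) : Matrix ι ι ℝ :=
  ∑ n, (h n * h' n) • vecMulVec (u n) (u n)

variable {u : ι → ι → ℝ} {h h' : ι → ℝ}

theorem spectralCov_apply (a b : ι) :
    spectralCov u h h' a b = ∑ n, h n * h' n * (u n a * u n b) := by
  simp [spectralCov, Matrix.sum_apply, vecMulVec_apply]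

theorem spectralCov_self_apply_add_sub (a b : ι) :
    spectralCov u h h a a + spectralCov u h h b b - 2 * spectralCov u h h a b
      = ∑ n, h n ^ 2 * (u n a - u n b) ^ 2 := by
  simp only [spectralCov_apply, mul_sum, ← sum_add_distrib, ← sum_sub_distrib]
  exact sum_congr rfl fun n _ => by ring

theorem sq_le_one_of_sum_sq_le_one (hh : ∑ n, h n ^ 2 ≤ 1) (n : ι) : h n ^ 2 ≤ 1 :=
  (single_le_sum (fun i _ => sq_nonneg (h i)) (mem_univ n)).trans hh

variable [DecidableEq ι]

theorem sum_sq_apply_eq_one_of_orthonormal (hu : ∀ n m, u n ⬝ᵥ u m = if n = m then 1 else 0)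
    (a : ι) : ∑ n, u n a ^ 2 = 1 := by
  have hrows : of u * (of u)ᵀ = 1 := by
    ext n m
    simpa [mul_apply, dotProduct, one_apply] using hu n m
  have hcols : (of u)ᵀ * of u = 1 := mul_eq_one_comm.mp hrows
  simpa [mul_apply, one_apply, sq] using congrArg (fun M => M a a) hcols

theorem abs_spectralCov_apply_le_one (hu : ∀ n m, u n ⬝ᵥ u m = if n = m then 1 else 0)
    (hh : ∑ n, h n ^ 2 ≤ 1) (hh' : ∑ n, h' n ^ 2 ≤ 1) (a b : ι) :
    |spectralCov u h h' a b| ≤ 1 := by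
  have hcol : ∀ {x : ι → ℝ}, ∑ n, x n ^ 2 ≤ 1 → ∀ a, ∑ n, (x n * u n a) ^ 2 ≤ 1 :=
    fun hh a => (sum_sq_apply_eq_one_of_orthonormal hu a).symm ▸ sum_le_sum fun n _ => by
      rw [mul_pow]
      exact mul_le_of_le_one_left (sq_nonneg _) (sq_le_one_of_sum_sq_le_one hh n)
  rw [← sq_le_one_iff_abs_le_one, spectralCov_apply]
  calc (∑ n, h n * h' n * (u n a * u n b)) ^ 2
      = (∑ n, (h n * u n a) * (h' n * u n b)) ^ 2 := by
        congr 1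
        exact sum_congr rfl fun n _ => by ring
    _ ≤ (∑ n, (h n * u n a) ^ 2) * (∑ n, (h' n * u n b) ^ 2) := sum_mul_sq_le_sq_mul_sq _ _ _
    _ ≤ 1 := mul_le_one₀ (hcol hh a) (sum_nonneg fun _ _ => sq_nonneg _) (hcol hh' b)

end SpectralCovariance

section BandLimited

variable {α : Type*} [Fintype α] [LinearOrder α] {W : Matrix α α ℝ} {G : SimpleGraph α}
  {wmin : ℝ} {u : α → α → ℝ} {h : α → ℝ} {B : Finset α}

theorem sum_sq_mul_sq_sub_le (hconn : G.Connected) (hsymm : W.IsSymm) (hW : ∀ i j, 0 ≤ W i j)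
    (hwmin : 0 < wmin) (hadj : ∀ i j, G.Adj i j → wmin ≤ W i j)
    (hh : ∑ n, h n ^ 2 ≤ 1) (hband : ∀ n ∉ B, h n = 0) (a b : α) :
    ∑ n, h n ^ 2 * (u n a - u n b) ^ 2
      ≤ G.dist a b ^ 2 * (∑ n ∈ B, totalVariation W (u n)) / wmin := by
  rw [← sum_subset (subset_univ B) fun n _ hn => by simp [hband n hn], mul_sum, sum_div]
  refine sum_le_sum fun n _ => ?_
  have hdist : (G.dist a b : ℝ) ≤ G.dist a b ^ 2 := by
    exact_mod_cast Nat.le_self_pow two_ne_zero _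
  calc h n ^ 2 * (u n a - u n b) ^ 2 ≤ (u n a - u n b) ^ 2 :=
        mul_le_of_le_one_left (sq_nonneg _) (sq_le_one_of_sum_sq_le_one hh n)
    _ ≤ G.dist a b * totalVariation W (u n) / wmin := by
        rw [le_div_iff₀ hwmin, mul_comm]
        exact mul_sq_sub_le_dist_mul_totalVariation hconn hsymm hW hwmin.le hadj _ a b
    _ ≤ G.dist a b ^ 2 * totalVariation W (u n) / wmin := by
        gcongr
        exact totalVariation_nonneg hW _

theorem half_add_sub_le_abs_spectralCov (hconn : G.Connected) (hsymm : W.IsSymm)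
    (hW : ∀ i j, 0 ≤ W i j) (hwmin : 0 < wmin) (hadj : ∀ i j, G.Adj i j → wmin ≤ W i j)
    (hh : ∑ n, h n ^ 2 ≤ 1) (hband : ∀ n ∉ B, h n = 0) (a b : α) :
    (spectralCov u h h a a + spectralCov u h h b b) / 2
      - 1 / (2 * wmin) * (G.dist a b ^ 2 * ∑ n ∈ B, totalVariation W (u n))
      ≤ |spectralCov u h h a b| := by
  have hquad := sum_sq_mul_sq_sub_le (u := u) hconn hsymm hW hwmin hadj hh hband a b
  rw [← spectralCov_self_apply_add_sub] at hquad
  have := le_abs_self (spectralCov u h h a b)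
  rw [one_div_mul_eq_div, mul_comm 2 wmin, ← div_div]
  linarith

end BandLimited

section Mixing

variable {ι : Type*} [Fintype ι] [DecidableEq ι]

theorem abs_sum_sub_le_sum_erase_abs (f : ι → ℝ) (i : ι) :
    |∑ j, f j - f i| ≤ ∑ j ∈ univ.erase i, |f j| := by
  rw [← add_sum_erase _ f (mem_univ i), add_sub_cancel_left]
  exact abs_sum_le_sum_abs _ _

theorem sum_abs_le_mul_one_add {x : ι → ℝ} {k : ι} {r : ℝ} (hk : 0 ≤ x k)
    (hx : ∀ m ≠ k, |x m| ≤ r * x k) :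
    ∑ m, |x m| ≤ x k * (1 + (Fintype.card ι - 1) * r) := by
  rw [← add_sum_erase _ _ (mem_univ k), abs_of_nonneg hk]
  have hrest : ∑ m ∈ univ.erase k, |x m| ≤ (univ.erase k).card • (r * x k) :=
    sum_le_card_nsmul _ _ _ fun m hm => hx m (ne_of_mem_erase hm)
  rw [card_erase_of_mem (mem_univ k), card_univ, nsmul_eq_mul,
    Nat.cast_sub (Fintype.card_pos_iff.mpr ⟨k⟩), Nat.cast_one] at hrest
  linarith

/-- The error term is `s² - 1` with `s = 1 + (card ι - 1) r`: it collects the pairs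
`(m, m') ≠ (k, k)` of the expanded product `(∑ |x|) (∑ |y|)`. -/
theorem sq_mul_sub_le_abs_sum_mul_mul {c : ι → ι → ℝ} (hc : ∀ m m', |c m m'| ≤ 1)
    {x y : ι → ℝ} {k : ι} {μ r : ℝ} (hμ : 0 ≤ μ) (hxk : μ ≤ x k) (hyk : μ ≤ y k)
    (hx : ∀ m ≠ k, |x m| ≤ r * x k) (hy : ∀ m ≠ k, |y m| ≤ r * y k) :
    μ ^ 2 * (|c k k| - (2 * (Fintype.card ι - 1) * r + (Fintype.card ι - 1) ^ 2 * r ^ 2))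
      ≤ |∑ m, ∑ m', x m * c m m' * y m'| := by
  set s : ℝ := 1 + (Fintype.card ι - 1) * r
  have hxk0 : 0 ≤ x k := hμ.trans hxk
  have hyk0 : 0 ≤ y k := hμ.trans hyk
  have hcross : |∑ m, ∑ m', x m * c m m' * y m' - x k * c k k * y k|
      ≤ (∑ m, |x m|) * (∑ m', |y m'|) - x k * y k := by
    rw [← Fintype.sum_prod_type' (fun m m' => x m * c m m' * y m')]
    refine (abs_sum_sub_le_sum_erase_abs
      (fun p : ι × ι => x p.1 * c p.1 p.2 * y p.2) (k, k)).trans ?_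
    calc ∑ p ∈ univ.erase (k, k), |x p.1 * c p.1 p.2 * y p.2|
        ≤ ∑ p ∈ univ.erase (k, k), |x p.1| * |y p.2| := sum_le_sum fun p _ => by
          rw [abs_mul, abs_mul]
          exact mul_le_mul_of_nonneg_right
            (mul_le_of_le_one_right (abs_nonneg _) (hc _ _)) (abs_nonneg _)
      _ = (∑ m, |x m|) * (∑ m', |y m'|) - x k * y k := by
        rw [sum_erase_eq_sub (mem_univ _), sum_mul_sum, ← Fintype.sum_prod_type',
          abs_of_nonneg hxk0, abs_of_nonneg hyk0]
  have hprod : (∑ m, |x m|) * (∑ m', |y m'|) ≤ x k * s * (y k * s) :=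
    mul_le_mul (sum_abs_le_mul_one_add hxk0 hx) (sum_abs_le_mul_one_add hyk0 hy)
      (sum_nonneg fun _ _ => abs_nonneg _)
      ((sum_nonneg fun _ _ => abs_nonneg _).trans (sum_abs_le_mul_one_add hxk0 hx))
  have hkey : x k * y k * (|c k k| - (s ^ 2 - 1)) ≤ |∑ m, ∑ m', x m * c m m' * y m'| := by
    have htri := abs_sub_abs_le_abs_sub (x k * c k k * y k) (∑ m, ∑ m', x m * c m m' * y m')
    rw [abs_sub_comm, abs_mul, abs_mul, abs_of_nonneg hxk0, abs_of_nonneg hyk0] at htri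
    linarith
  have hE : 2 * (Fintype.card ι - 1) * r + (Fintype.card ι - 1) ^ 2 * r ^ 2 = s ^ 2 - 1 := by ring
  rw [hE]
  rcases le_or_gt 0 (|c k k| - (s ^ 2 - 1)) with hpos | hneg
  · refine le_trans ?_ hkey
    exact mul_le_mul_of_nonneg_right (by nlinarith) hpos
  · exact (mul_nonpos_of_nonneg_of_nonpos (sq_nonneg μ) hneg.le).trans (abs_nonneg _)

end Mixing

section LocallyStationary

variable {α κ : Type*} [Fintype α] [LinearOrder α] [Fintype κ]

noncomputable def lsgpCov (g : κ → α → ℝ) (u : α → α → ℝ) (h : κ → α → ℝ) : Matrix α α ℝ :=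
  ∑ k, ∑ m, diagonal (g k) * spectralCov u (h k) (h m) * (diagonal (g m))ᵀ

theorem lsgpCov_apply (g : κ → α → ℝ) (u : α → α → ℝ) (h : κ → α → ℝ) (a b : α) :
    lsgpCov g u h a b = ∑ k, ∑ m, g k a * spectralCov u (h k) (h m) a b * g m b := by
  simp [lsgpCov, Matrix.sum_apply, diagonal_transpose, diagonal_mul, mul_diagonal]

variable [DecidableEq κ]

theorem sq_mul_sub_le_abs_lsgpCov_apply {W : Matrix α α ℝ} {G : SimpleGraph α} {wmin : ℝ}
    {u : α → α → ℝ} {g h : κ → α → ℝ} {B : Finset α} (hconn : G.Connected) (hsymm : W.IsSymm)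
    (hW : ∀ i j, 0 ≤ W i j) (hwmin : 0 < wmin) (hadj : ∀ i j, G.Adj i j → wmin ≤ W i j)
    (hu : ∀ n m, u n ⬝ᵥ u m = if n = m then 1 else 0) (hh : ∀ k, ∑ n, h k n ^ 2 ≤ 1)
    (hband : ∀ k, ∀ n ∉ B, h k n = 0) {k : κ} {a b : α} {μ r : ℝ} (hμ : 0 ≤ μ)
    (hak : μ ≤ g k a) (hbk : μ ≤ g k b)
    (hra : ∀ m ≠ k, |g m a| ≤ r * g k a) (hrb : ∀ m ≠ k, |g m b| ≤ r * g k b) :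
    μ ^ 2 * ((spectralCov u (h k) (h k) a a + spectralCov u (h k) (h k) b b) / 2
        - 1 / (2 * wmin) * (G.dist a b ^ 2 * ∑ n ∈ B, totalVariation W (u n))
        - (2 * (Fintype.card κ - 1) * r + (Fintype.card κ - 1) ^ 2 * r ^ 2))
      ≤ |lsgpCov g u h a b| := by
  have hspec := half_add_sub_le_abs_spectralCov (u := u) hconn hsymm hW hwmin hadj (hh k)
    (hband k) a b
  have hmix := sq_mul_sub_le_abs_sum_mul_mul (c := fun m m' => spectralCov u (h m) (h m') a b)
    (fun m m' => abs_spectralCov_apply_le_one hu (hh m) (hh m') a b) hμ hak hbk hra hrb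
  rw [← lsgpCov_apply] at hmix
  exact (mul_le_mul_of_nonneg_left (by linarith) (sq_nonneg μ)).trans hmix

end LocallyStationary

theorem sum_sum_add_div_two {ι : Type*} (s : Finset ι) (f : ι → ℝ) :
    ∑ a ∈ s, ∑ b ∈ s, (f a + f b) / 2 = #s * ∑ a ∈ s, f a := by
  simp only [add_div, sum_add_distrib, sum_const, nsmul_eq_mul, ← mul_sum, ← sum_div]
  ring

theorem mul_sub_le_sum_sum_of_le {ι : Type*} {s : Finset ι} {c : ι → ℝ} {X Y : ι → ι → ℝ}
    {t w E : ℝ} (hle : ∀ a ∈ s, ∀ b ∈ s, t * ((c a + c b) / 2 - w * X a b - E) ≤ Y a b) :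
    t * (#s * ∑ a ∈ s, c a - w * ∑ a ∈ s, ∑ b ∈ s, X a b - #s ^ 2 * E)
      ≤ ∑ a ∈ s, ∑ b ∈ s, Y a b := by
  refine le_of_eq_of_le ?_ (sum_le_sum fun a ha => sum_le_sum fun b hb => hle a ha b hb)
  simp only [← mul_sum, sum_sub_distrib, sum_sum_add_div_two, sum_const, nsmul_eq_mul]
  ring

theorem abs_le_div_mul_of_abs_le {x y δ μ : ℝ} (hx : |x| ≤ δ) (hμ : 0 < μ) (hy : μ ≤ y) :
    |x| ≤ δ / μ * y :=
  calc |x| ≤ δ / μ * μ := by rwa [div_mul_cancel₀ δ hμ.ne']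
    _ ≤ δ / μ * y := mul_le_mul_of_nonneg_left hy (div_nonneg ((abs_nonneg x).trans hx) hμ.le)

theorem lsgp_within_subgraph_covariance_lower_bound_general
    {N K : ℕ} (W : Matrix (Fin N) (Fin N) ℝ)
    (hsymm : W.IsSymm) (hnonneg : ∀ i j, 0 ≤ W i j)
    (G : SimpleGraph (Fin N))
    (hG : G = SimpleGraph.fromRel (fun i j => W i j ≠ 0))
    (hconn : G.Connected)
    (wmin : ℝ) (hwpos : 0 < wmin)
    (hwmin : IsLeast {w : ℝ | ∃ i j, W i j ≠ 0 ∧ w = W i j} wmin)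
    (u : Fin N → Fin N → ℝ)
    (hu : ∀ n m, u n ⬝ᵥ u m = if n = m then (1 : ℝ) else 0)
    (T : Fin N → ℝ)
    (hT : ∀ n, T n = ∑ i, ∑ j, if i < j ∧ W i j ≠ 0 then W i j * (u n i - u n j) ^ 2 else 0)
    (V : Fin K → Finset (Fin N))
    (g : Fin K → Fin N → ℝ)
    (δ μ : ℝ) (hμ : 0 < μ)
    (hoff : ∀ k m, k ≠ m → ∀ i ∈ V k, |g m i| ≤ δ)
    (hlow : ∀ k, ∀ i ∈ V k, μ ≤ g k i)
    (h : Fin K → Fin N → ℝ) (hh : ∀ k, ∑ i, (h k i) ^ 2 = 1)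
    (κ : ℕ)
    (hband : ∀ k, ∀ i : Fin N, κ ≤ (i : ℕ) → h k i = 0)
    (Ckm : Fin K → Fin K → Matrix (Fin N) (Fin N) ℝ)
    (hCkm : ∀ k m, Ckm k m = ∑ n, (h k n * h m n) • Matrix.vecMulVec (u n) (u n))
    (Cx : Matrix (Fin N) (Fin N) ℝ)
    (hCx : Cx = ∑ k, ∑ m, Matrix.diagonal (g k) * Ckm k m * (Matrix.diagonal (g m))ᵀ)
    (σsq : Fin K → ℝ)
    (hσsq : ∀ k, σsq k = ∑ i ∈ V k, Ckm k k i i) :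
    (1 / ((N : ℝ) ^ 2 * μ ^ 2)) * ∑ k, ∑ i ∈ V k, ∑ j ∈ V k, |Cx i j|
      ≥ (1 / (N : ℝ) ^ 2) * ∑ k, ((V k).card : ℝ) * σsq k
        - (1 / (2 * (N : ℝ) ^ 2 * wmin)) *
            ∑ k, ∑ i ∈ V k, ∑ j ∈ V k,
              (G.dist i j : ℝ) ^ 2 *
                (∑ n ∈ Finset.univ.filter (fun n : Fin N => (n : ℕ) < κ), T n)
        - (1 / (N : ℝ) ^ 2) * (∑ k, ((V k).card : ℝ) ^ 2) *
            (2 * ((K : ℝ) - 1) * (δ / μ) + ((K : ℝ) - 1) ^ 2 * (δ / μ) ^ 2) := by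
  have hC : ∀ k m, Ckm k m = spectralCov u (h k) (h m) := hCkm
  have hCx' : Cx = lsgpCov g u h := by simp only [hCx, hC, lsgpCov]
  have hadj : ∀ i j, G.Adj i j → wmin ≤ W i j := by
    intro i j hij
    rw [hG, SimpleGraph.fromRel_adj] at hij
    have hWij : W i j ≠ 0 := hij.2.elim id fun hji => by rwa [hsymm.apply i j] at hji
    exact hwmin.2 ⟨i, j, hWij, rfl⟩
  set B := univ.filter fun n : Fin N => (n : ℕ) < κ
  set S := ∑ n ∈ B, T n
  set E := 2 * ((K : ℝ) - 1) * (δ / μ) + ((K : ℝ) - 1) ^ 2 * (δ / μ) ^ 2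
  have hS : S = ∑ n ∈ B, totalVariation W (u n) := sum_congr rfl fun n _ => hT n
  have hblock : ∀ k, μ ^ 2 * ((V k).card * σsq k
      - 1 / (2 * wmin) * ∑ i ∈ V k, ∑ j ∈ V k, (G.dist i j : ℝ) ^ 2 * S - (V k).card ^ 2 * E)
        ≤ ∑ i ∈ V k, ∑ j ∈ V k, |Cx i j| := by
    intro k
    rw [hσsq]
    refine mul_sub_le_sum_sum_of_le fun a ha b hb => ?_
    have hratio : ∀ i ∈ V k, ∀ m ≠ k, |g m i| ≤ δ / μ * g k i := fun i hi m hm =>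
      abs_le_div_mul_of_abs_le (hoff k m hm.symm i hi) hμ (hlow k i hi)
    simpa [hC, hCx', hS, E] using sq_mul_sub_le_abs_lsgpCov_apply (B := B) hconn hsymm hnonneg
      hwpos hadj hu (fun k => (hh k).le) (fun k n hn => hband k n (by simpa [B] using hn))
      hμ.le (hlow k a ha) (hlow k b hb) (hratio a ha) (hratio b hb)
  calc _ ≥ (1 / ((N : ℝ) ^ 2 * μ ^ 2)) * ∑ k, μ ^ 2 * ((V k).card * σsq k
        - 1 / (2 * wmin) * ∑ i ∈ V k, ∑ j ∈ V k, (G.dist i j : ℝ) ^ 2 * S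
        - (V k).card ^ 2 * E) := by gcongr with k; exact hblock k
    _ = _ := by
      simp only [← mul_sum, sum_sub_distrib, ← sum_mul]
      field_simp

/-- Theorem 4: lower bound on the average within-subgraph covariance magnitude of an
LSGP with localized memberships and band-limited kernels. -/
theorem lsgp_within_subgraph_covariance_lower_bound
    {N K : ℕ} (W : Matrix (Fin N) (Fin N) ℝ)
    (hsymm : W.IsSymm) (hnonneg : ∀ i j, 0 ≤ W i j)
    (G : SimpleGraph (Fin N))
    (hG : G = SimpleGraph.fromRel (fun i j => W i j ≠ 0))
    (hconn : G.Connected)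
    (wmin : ℝ) (hwpos : 0 < wmin)
    (hwmin : IsLeast {w : ℝ | ∃ i j, W i j ≠ 0 ∧ w = W i j} wmin)
    (u : Fin N → Fin N → ℝ)
    (hu : ∀ n m, u n ⬝ᵥ u m = if n = m then (1 : ℝ) else 0)
    (T : Fin N → ℝ)
    (hT : ∀ n, T n = ∑ i, ∑ j, if i < j ∧ W i j ≠ 0 then W i j * (u n i - u n j) ^ 2 else 0)
    (V : Fin K → Finset (Fin N))
    (hdisj : ∀ k m, k ≠ m → Disjoint (V k) (V m))
    (hne : ∀ k, (V k).Nonempty)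
    (hcover : ∀ i : Fin N, ∃ k, i ∈ V k)
    (g : Fin K → Fin N → ℝ)
    (δ μ γ : ℝ) (hδ : 0 < δ) (hμ : 0 < μ) (hγ : 0 < γ)
    (hoff : ∀ k m, k ≠ m → ∀ i ∈ V k, |g m i| ≤ δ)
    (hlow : ∀ k, ∀ i ∈ V k, μ ≤ g k i)
    (hhigh : ∀ k, ∀ i ∈ V k, g k i ≤ γ)
    (h : Fin K → Fin N → ℝ) (hh : ∀ k, ∑ i, (h k i) ^ 2 = 1)
    (κ : ℕ) (hκ1 : 1 ≤ κ) (hκN : κ ≤ N)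
    (hband : ∀ k, ∀ i : Fin N, κ ≤ (i : ℕ) → h k i = 0)
    (Ckm : Fin K → Fin K → Matrix (Fin N) (Fin N) ℝ)
    (hCkm : ∀ k m, Ckm k m = ∑ n, (h k n * h m n) • Matrix.vecMulVec (u n) (u n))
    (Cx : Matrix (Fin N) (Fin N) ℝ)
    (hCx : Cx = ∑ k, ∑ m, Matrix.diagonal (g k) * Ckm k m * (Matrix.diagonal (g m))ᵀ)
    (σsq : Fin K → ℝ)
    (hσsq : ∀ k, σsq k = ∑ i ∈ V k, Ckm k k i i) :
    (1 / ((N : ℝ) ^ 2 * μ ^ 2)) * ∑ k, ∑ i ∈ V k, ∑ j ∈ V k, |Cx i j|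
      ≥ (1 / (N : ℝ) ^ 2) * ∑ k, ((V k).card : ℝ) * σsq k
        - (1 / (2 * (N : ℝ) ^ 2 * wmin)) *
            ∑ k, ∑ i ∈ V k, ∑ j ∈ V k,
              (G.dist i j : ℝ) ^ 2 *
                (∑ n ∈ Finset.univ.filter (fun n : Fin N => (n : ℕ) < κ), T n)
        - (1 / (N : ℝ) ^ 2) * (∑ k, ((V k).card : ℝ) ^ 2) *
            (2 * ((K : ℝ) - 1) * (δ / μ) + ((K : ℝ) - 1) ^ 2 * (δ / μ) ^ 2) :=
  lsgp_within_subgraph_covariance_lower_bound_general W hsymm hnonneg G hG hconn wmin hwpos hwmin u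
    hu T hT V g δ μ hμ hoff hlow h hh κ hband Ckm hCkm Cx hCx σsq hσsq
end
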